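/- arXiv:1606.08818 — 6 statements merged into one kernel-verified Lean document; each statement's English description precedes it below -/
import Mathlib

section
/- For every real symmetric m×m matrix C, the complex matrix I + iC is invertible and the real part Re((I + iC)^{−1}) is a positive definite symmetric matrix. -/
open Real Filter Matrix

noncomputable section

/-- The Hessian matrix of a function `v : ℝ^m → ℝ` at `x`. -/
def hessianMatrix {m : ℕ} (v : (Fin m → ℝ) → ℝ) (x : Fin m → ℝ) :
    Matrix (Fin m) (Fin m) ℝ :=
  Matrix.of fun i j => iteratedFDeriv ℝ 2 v x ![Pi.single i 1, Pi.single j 1]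

/-- The lifted Lagrangian angle θ̃(A) = ∑ arctan λ_j(A) of a real symmetric matrix. -/
def liftedAngle {m : ℕ} (A : Matrix (Fin m) (Fin m) ℝ) : ℝ :=
  if h : A.IsHermitian then ∑ j, Real.arctan (h.eigenvalues j) else 0

/-- The Harvey–Lawson branches `F_c` of the special Lagrangian subequation. -/
def Fc (m : ℕ) (c : ℝ) : Set (Matrix (Fin m) (Fin m) ℝ) :=
  {A | A.IsSymm ∧ c ≤ liftedAngle A}

/-- `I_n = diag(0,1,…,1)` as a complex `(n+1)×(n+1)` matrix. -/
def Inmat (n : ℕ) : Matrix (Fin (n+1)) (Fin (n+1)) ℂ :=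
  Matrix.diagonal fun i => if i = 0 then 0 else 1

/-- The complex matrix `I_n + i A`. -/
def cmat {n : ℕ} (A : Matrix (Fin (n+1)) (Fin (n+1)) ℝ) :
    Matrix (Fin (n+1)) (Fin (n+1)) ℂ :=
  Inmat n + Complex.I • A.map (fun a => (a : ℂ))

open Classical in
/-- The lifted space-time Lagrangian angle Θ̃, summing `Complex.arg` (with values in
`(-π, π]`) over the roots (with multiplicity) of the characteristic polynomial of
`I_n + i A`, shifted by `π/2` over the singular set `S = {det (I_n + iA) = 0}` where only
the nonzero roots are counted. -/
def spaceTimeAngle {n : ℕ} (A : Matrix (Fin (n+1)) (Fin (n+1)) ℝ) : ℝ :=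
  if (cmat A).det = 0 then
    π / 2 + ((((cmat A).charpoly.roots).filter (fun z => z ≠ 0)).map Complex.arg).sum
  else (((cmat A).charpoly.roots).map Complex.arg).sum

/-- The degenerate special Lagrangian subequation `ℱ_c ⊂ Sym(ℝ^{n+1})`. -/
def calF (n : ℕ) (c : ℝ) : Set (Matrix (Fin (n+1)) (Fin (n+1)) ℝ) :=
  {A | A.IsSymm ∧ c ≤ spaceTimeAngle A}

/-- Interior of a set of symmetric matrices, relative to the symmetric matrices. -/
def symInterior {m : ℕ} (F : Set (Matrix (Fin m) (Fin m) ℝ)) :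
    Set (Matrix (Fin m) (Fin m) ℝ) :=
  {A | A.IsSymm ∧ ∀ᶠ B in nhds A, B.IsSymm → B ∈ F}

/-- The dual subequation `F̃ = (−Int F)ᶜ` (within the symmetric matrices). -/
def dualSub {m : ℕ} (F : Set (Matrix (Fin m) (Fin m) ℝ)) :
    Set (Matrix (Fin m) (Fin m) ℝ) :=
  {A | A.IsSymm ∧ -A ∉ symInterior F}

/-- An `EReal`-valued (i.e. `[−∞,∞)`-valued) function is subaffine on `U` if, for every
affine function `a` and compact `K ⊆ U`, `u ≤ a` on `∂K` implies `u ≤ a` on `K`. -/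
def IsSubaffine {m : ℕ} (U : Set (Fin m → ℝ)) (u : (Fin m → ℝ) → EReal) : Prop :=
  ∀ (a : (Fin m → ℝ) →ᵃ[ℝ] ℝ) (K : Set (Fin m → ℝ)), IsCompact K → K ⊆ U →
    (∀ x ∈ frontier K, u x ≤ (a x : EReal)) → ∀ x ∈ K, u x ≤ (a x : EReal)

/-- `u` is of type `F` on `U` (i.e. `u ∈ F(U)`): `u` is `[−∞,∞)`-valued, upper
semicontinuous on `U`, and `u + v` is subaffine on `U` for every `C²` function `v`
whose Hessian lies in the dual subequation `F̃` at every point of `U`. -/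
def IsTypeF {m : ℕ} (F : Set (Matrix (Fin m) (Fin m) ℝ)) (U : Set (Fin m → ℝ))
    (u : (Fin m → ℝ) → EReal) : Prop :=
  (∀ x ∈ U, u x ≠ ⊤) ∧ UpperSemicontinuousOn u U ∧
    ∀ v : (Fin m → ℝ) → ℝ, ContDiffOn ℝ 2 v U →
      (∀ x ∈ U, hessianMatrix v x ∈ dualSub F) →
      IsSubaffine U (fun x => u x + ((v x : ℝ) : EReal))

/-- The lower-right `n×n` block `A⁺` of an `(n+1)×(n+1)` matrix. -/
def Aplus {n : ℕ} (A : Matrix (Fin (n+1)) (Fin (n+1)) ℝ) : Matrix (Fin n) (Fin n) ℝ :=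
  Matrix.of fun i j => A i.succ j.succ

end

/-!
Since `C` is symmetric, `(I + iC)(I - iC) = I + C² = I + CᵀC` is real and positive definite.
Hence `(I + iC)⁻¹ = (I + C²)⁻¹ - i C (I + C²)⁻¹`, whose real part `(I + C²)⁻¹` is positive
definite.
-/

open Complex

theorem one_add_I_smul_mul_one_sub_I_smul {A : Type*} [Ring A] [Algebra ℂ A] (a : A) :
    (1 + I • a) * (1 - I • a) = 1 + a * a := by
  rw [add_mul, one_mul, mul_sub, mul_one, smul_mul_smul_comm, I_mul_I, neg_one_smul]
  abel

namespace Matrix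

theorem map_re_ofReal_sub_I_smul {m n : Type*} (X Y : Matrix m n ℝ) :
    (X.map ofReal - I • Y.map ofReal).map re = X := by
  ext i j
  simp

variable {n : Type*} [Fintype n] [DecidableEq n]

theorem IsHermitian.posDef_one_add_mul_self {R : Type*} [CommRing R] [PartialOrder R]
    [StarRing R] [StarOrderedRing R] [NoZeroDivisors R] {C : Matrix n n R}
    (hC : C.IsHermitian) : (1 + C * C).PosDef := by
  simpa only [hC.eq] using PosDef.one.add_posSemidef (posSemidef_conjTranspose_mul_self C)

theorem one_add_I_smul_mul_eq_one {C : Matrix n n ℝ} (hD : IsUnit (1 + C * C).det) :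
    (1 + I • C.map ofReal) *
      (((1 + C * C)⁻¹).map ofReal - I • (C * (1 + C * C)⁻¹).map ofReal) = 1 := by
  let φ := ofRealHom.mapMatrix (m := n)
  change (1 + I • φ C) * (φ (1 + C * C)⁻¹ - I • φ (C * (1 + C * C)⁻¹)) = 1
  rw [map_mul, ← smul_mul_assoc, ← one_sub_mul, ← mul_assoc, one_add_I_smul_mul_one_sub_I_smul,
    ← map_mul, ← map_one φ, ← map_add, ← map_mul, mul_nonsing_inv _ hD, map_one]

end Matrix

/-- For every real symmetric `m×m` matrix `C`, the complex matrix `I + iC` is invertible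
and the real part of its inverse is a positive definite (symmetric) matrix. -/
theorem re_inv_posDef (m : ℕ) (C : Matrix (Fin m) (Fin m) ℝ) (hC : C.IsSymm) :
    IsUnit ((1 : Matrix (Fin m) (Fin m) ℂ) + Complex.I • C.map (fun a => (a : ℂ))) ∧
    ((((1 : Matrix (Fin m) (Fin m) ℂ) +
        Complex.I • C.map (fun a => (a : ℂ)))⁻¹).map Complex.re).PosDef := by
  have hD : (1 + C * C).PosDef := (isHermitian_iff_isSymm.2 hC).posDef_one_add_mul_self
  have hinv := one_add_I_smul_mul_eq_one ((isUnit_iff_isUnit_det _).1 hD.isUnit)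
  refine ⟨(isUnit_iff_isUnit_det _).2 (isUnit_det_of_right_inverse hinv), ?_⟩
  rw [inv_eq_right_inv hinv, map_re_ofReal_sub_I_smul]
  exact hD.inv
end

section
/- Let C be a real symmetric m×m matrix (so that I + iC is invertible). Then C is positive semidefinite if and only if Im((I + iC)^{−1}) is negative semidefinite; likewise, C is positive definite if and only if Im((I + iC)^{−1}) is negative definite. -/
open Real Filter Matrix

/-- A real matrix is negative semidefinite iff its negation is positive semidefinite. -/
def NegSemidef {m : ℕ} (M : Matrix (Fin m) (Fin m) ℝ) : Prop :=
  (-M).PosSemidef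

/-- A real matrix is negative definite iff its negation is positive definite. -/
def NegDef {m : ℕ} (M : Matrix (Fin m) (Fin m) ℝ) : Prop :=
  (-M).PosDef

/-!
For real symmetric `C` put `X = 1 + C * C`, which is positive definite, and `T = X⁻¹ * C`.
Since `C` commutes with `X⁻¹`, `(1 + iC)(X⁻¹ - iT) = X⁻¹ + C T = 1`, so
`Im((1 + iC)⁻¹) = -T`.
Definiteness passes between `C` and `T` through the congruences `C = T + Cᴴ T C` and
`T = X⁻¹ᴴ (C + Cᴴ C C) X⁻¹`.
-/

open scoped ComplexOrder

namespace Matrix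

variable {n : Type*}

theorem map_im_map_ofReal_add_I_smul (R S : Matrix n n ℝ) :
    (R.map (fun a => (a : ℂ)) + Complex.I • S.map (fun a => (a : ℂ))).map Complex.im = S := by
  ext i j
  simp

variable [Fintype n] [DecidableEq n]

section RCLike

variable {𝕜 : Type*} [RCLike 𝕜] {C : Matrix n n 𝕜}

theorem IsHermitian.posDef_one_add_mul_self_s3 (hC : C.IsHermitian) : (1 + C * C).PosDef := by
  simpa only [hC.eq] using PosDef.one.add_posSemidef (posSemidef_conjTranspose_mul_self C)

theorem IsHermitian.commute_inv_one_add_mul_self (hC : C.IsHermitian) :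
    Commute C (1 + C * C)⁻¹ := by
  have hX := hC.posDef_one_add_mul_self_s3.isUnit
  have hcomm : Commute C (1 + C * C) :=
    (Commute.one_right C).add_right ((Commute.refl C).mul_right (Commute.refl C))
  rw [← hX.unit_spec, ← coe_units_inv]
  exact hcomm.units_inv_right

theorem IsHermitian.inv_one_add_mul_self_mul_self (hC : C.IsHermitian) :
    (1 + C * C)⁻¹ * (1 + C * C) = 1 :=
  nonsing_inv_mul _ ((isUnit_iff_isUnit_det _).mp hC.posDef_one_add_mul_self_s3.isUnit)

theorem IsHermitian.eq_add_conjTranspose_mul_inv_one_add_mul_self_mul_mul (hC : C.IsHermitian) :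
    C = (1 + C * C)⁻¹ * C + Cᴴ * ((1 + C * C)⁻¹ * C) * C := by
  calc C = (1 + C * C)⁻¹ * (1 + C * C) * C := by rw [hC.inv_one_add_mul_self_mul_self, one_mul]
    _ = _ := by rw [hC.eq, ← mul_assoc C, hC.commute_inv_one_add_mul_self.eq]; noncomm_ring

theorem IsHermitian.inv_one_add_mul_self_mul_eq (hC : C.IsHermitian) :
    (1 + C * C)⁻¹ * C = (1 + C * C)⁻¹ᴴ * (C + Cᴴ * C * C) * (1 + C * C)⁻¹ := by
  have hX := (isUnit_iff_isUnit_det _).mp hC.posDef_one_add_mul_self_s3.isUnit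
  calc (1 + C * C)⁻¹ * C = (1 + C * C)⁻¹ * C * ((1 + C * C) * (1 + C * C)⁻¹) := by
        rw [mul_nonsing_inv _ hX, mul_one]
    _ = _ := by rw [hC.posDef_one_add_mul_self_s3.isHermitian.inv.eq, hC.eq]; noncomm_ring

theorem IsHermitian.posSemidef_inv_one_add_mul_self_mul_iff (hC : C.IsHermitian) :
    ((1 + C * C)⁻¹ * C).PosSemidef ↔ C.PosSemidef := by
  refine ⟨fun hT => ?_, fun hC' => ?_⟩
  · rw [hC.eq_add_conjTranspose_mul_inv_one_add_mul_self_mul_mul]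
    exact hT.add (hT.conjTranspose_mul_mul_same C)
  · rw [hC.inv_one_add_mul_self_mul_eq]
    exact (hC'.add (hC'.conjTranspose_mul_mul_same C)).conjTranspose_mul_mul_same _

theorem IsHermitian.posDef_inv_one_add_mul_self_mul_iff (hC : C.IsHermitian) :
    ((1 + C * C)⁻¹ * C).PosDef ↔ C.PosDef := by
  refine ⟨fun hT => ?_, fun hC' => ?_⟩
  · rw [hC.eq_add_conjTranspose_mul_inv_one_add_mul_self_mul_mul]
    exact hT.add_posSemidef (hT.posSemidef.conjTranspose_mul_mul_same C)
  · rw [hC.inv_one_add_mul_self_mul_eq]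
    refine PosDef.conjTranspose_mul_mul_same
      (hC'.add_posSemidef (hC'.posSemidef.conjTranspose_mul_mul_same C)) ?_
    exact mulVec_injective_iff_isUnit.mpr
      (isUnit_nonsing_inv_iff.mpr hC.posDef_one_add_mul_self_s3.isUnit)

end RCLike

theorem inv_map_ofReal_add_I_smul {A B R S : Matrix n n ℝ} (h₁ : A * R - B * S = 1)
    (h₂ : A * S + B * R = 0) :
    (A.map (fun a => (a : ℂ)) + Complex.I • B.map (fun a => (a : ℂ)))⁻¹ =
      R.map (fun a => (a : ℂ)) + Complex.I • S.map (fun a => (a : ℂ)) := by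
  apply inv_eq_right_inv
  let φ := (Complex.ofRealHom : ℝ →+* ℂ).mapMatrix (m := n)
  have e₁ := congrArg φ h₁
  have e₂ := congrArg φ h₂
  simp only [map_sub, map_add, map_mul, map_one, map_zero] at e₁ e₂
  change (φ A + Complex.I • φ B) * (φ R + Complex.I • φ S) = 1
  calc _ = (φ A * φ R - φ B * φ S) + Complex.I • (φ A * φ S + φ B * φ R) := by
        simp only [add_mul, mul_add, smul_mul, Matrix.mul_smul, smul_smul, Complex.I_mul_I]
        module
    _ = 1 := by rw [e₁, e₂, smul_zero, add_zero]

theorem IsHermitian.inv_one_add_I_smul_map_ofReal {C : Matrix n n ℝ} (hC : C.IsHermitian) :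
    (1 + Complex.I • C.map (fun a => (a : ℂ)))⁻¹ =
      (1 + C * C)⁻¹.map (fun a => (a : ℂ)) +
        Complex.I • (-((1 + C * C)⁻¹ * C)).map (fun a => (a : ℂ)) := by
  have hcomm := hC.commute_inv_one_add_mul_self.eq
  have h := inv_map_ofReal_add_I_smul (A := 1) (B := C) (R := (1 + C * C)⁻¹)
    (S := -((1 + C * C)⁻¹ * C)) ?_ ?_
  · rwa [Matrix.map_one _ Complex.ofReal_zero Complex.ofReal_one] at h
  · rw [one_mul, mul_neg, sub_neg_eq_add, ← mul_assoc, hcomm, mul_assoc, ← mul_one_add,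
      hC.inv_one_add_mul_self_mul_self]
  · rw [one_mul, hcomm, neg_add_cancel]

end Matrix

/-- Let `C` be a real symmetric `m×m` matrix (so `I + iC` is invertible).  Then `C` is
positive semidefinite iff `Im((I + iC)⁻¹)` is negative semidefinite, and `C` is positive
definite iff `Im((I + iC)⁻¹)` is negative definite. -/
theorem im_inv_negSemidef (m : ℕ) (C : Matrix (Fin m) (Fin m) ℝ) (hC : C.IsSymm) :
    (C.PosSemidef ↔
      NegSemidef ((((1 : Matrix (Fin m) (Fin m) ℂ) +
        Complex.I • C.map (fun a => (a : ℂ)))⁻¹).map Complex.im)) ∧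
    (C.PosDef ↔
      NegDef ((((1 : Matrix (Fin m) (Fin m) ℂ) +
        Complex.I • C.map (fun a => (a : ℂ)))⁻¹).map Complex.im)) := by
  have hC' : C.IsHermitian := by
    rwa [IsHermitian, conjTranspose_eq_transpose_of_trivial]
  rw [hC'.inv_one_add_I_smul_map_ofReal, map_im_map_ofReal_add_I_smul, NegSemidef, NegDef,
    neg_neg]
  exact ⟨hC'.posSemidef_inv_one_add_mul_self_mul_iff.symm,
    hC'.posDef_inv_one_add_mul_self_mul_iff.symm⟩
end

section
/- Let n ≥ 1 and c ∈ [nπ/2, (n+1)π/2). If A ∈ ℱ_c, i.e. A ∈ Sym(ℝ^{n+1}) with Θ̃(A) ≥ c, then a_00 ≥ 0. -/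
open Real Filter Matrix

/-!
Suppose `a₀₀ < 0` and let `M = I_n + iA`. For an eigenvector `v` of `M` with eigenvalue `z`,
`z ‖v‖² = ⟨v, I_n v⟩ + i ⟨v, A v⟩` with both forms real and `0 ≤ ⟨v, I_n v⟩ ≤ ‖v‖²`, so
`Re z ∈ [0, 1]`; moreover `0` is not an eigenvalue, since a kernel vector would be a multiple
of `e₀` and then `a₀₀ = 0`. Hence `Θ̃(A)` is a sum of `n + 1` arguments in `[-π/2, π/2]`, and
`Θ̃(A) ≥ nπ/2` forces every argument, hence every `Im z`, to be nonnegative. On the other hand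
`Σ Im z (1 - Re z) = Im tr (M - M²/2) = a₀₀`, a sum of nonnegative terms.
-/

open Polynomial
open scoped ComplexOrder

namespace Matrix

variable {ι K : Type*} [Fintype ι] [DecidableEq ι] [Field K]

lemma exists_mulVec_eq_smul_of_mem_roots_charpoly {M : Matrix ι ι K} {t : K}
    (ht : t ∈ M.charpoly.roots) : ∃ v ≠ 0, M *ᵥ v = t • v := by
  have hdet : (scalar ι t - M).det = 0 := by
    rw [← eval_charpoly]
    exact (mem_roots'.mp ht).2
  obtain ⟨v, hv₀, hv⟩ := exists_mulVec_eq_zero_iff.mpr hdet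
  refine ⟨v, hv₀, ?_⟩
  rwa [sub_mulVec, sub_eq_zero, scalar_apply, ← smul_one_eq_diagonal, smul_mulVec, one_mulVec,
    eq_comm] at hv

variable [IsAlgClosed K]

lemma card_roots_charpoly (M : Matrix ι ι K) : M.charpoly.roots.card = Fintype.card ι := by
  rw [← (IsAlgClosed.splits _).natDegree_eq_card_roots, charpoly_natDegree_eq_dim]

lemma eval_charpoly_eq_prod_roots (M : Matrix ι ι K) (x : K) :
    M.charpoly.eval x = (M.charpoly.roots.map (x - ·)).prod := by
  conv_lhs => rw [(IsAlgClosed.splits M.charpoly).eq_prod_roots_of_monic M.charpoly_monic]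
  simp [eval_multiset_prod, Multiset.map_map]

-- Both sides agree at every square `x * x`, and in `K` every element is a square.
theorem charpoly_mul_self (M : Matrix ι ι K) :
    (M * M).charpoly = (M.charpoly.roots.map fun z => X - C (z * z)).prod := by
  refine Polynomial.funext fun y => ?_
  obtain ⟨x, rfl⟩ := IsAlgClosed.exists_eq_mul_self y
  have hfactor : scalar ι (x * x) - M * M = -((scalar ι x - M) * (scalar ι (-x) - M)) := by
    simp only [map_mul, map_neg, mul_sub, sub_mul, mul_neg,
      (scalar_commute x (fun _ => Commute.all _ _) M).eq]
    abel
  have hneg : (M.charpoly.roots.map (-x - ·)).prod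
      = (-1) ^ Fintype.card ι * (M.charpoly.roots.map (x + ·)).prod := by
    rw [← card_roots_charpoly M, ← Multiset.card_map (x + ·), ← Multiset.prod_map_neg,
      Multiset.map_map]
    exact congrArg _ (Multiset.map_congr rfl fun z _ => by simp only [Function.comp_apply]; ring)
  rw [eval_charpoly, hfactor, det_neg, det_mul, ← eval_charpoly, ← eval_charpoly,
    eval_charpoly_eq_prod_roots, eval_charpoly_eq_prod_roots, hneg, eval_multiset_prod,
    Multiset.map_map]
  calc _ = ((-1) ^ Fintype.card ι) ^ 2 * ((M.charpoly.roots.map (x - ·)).prod *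
        (M.charpoly.roots.map (x + ·)).prod) := by ring
    _ = _ := by
      rw [← pow_mul, mul_comm _ 2, pow_mul, neg_one_sq, one_pow, one_mul,
        ← Multiset.prod_map_mul]
      exact congrArg _ (Multiset.map_congr rfl fun z _ => by
        simp only [map_mul, Function.comp_apply, eval_sub, eval_X, eval_mul, eval_C]; ring)

theorem roots_charpoly_mul_self (M : Matrix ι ι K) :
    (M * M).charpoly.roots = M.charpoly.roots.map fun z => z * z := by
  rw [charpoly_mul_self]
  simpa [Multiset.map_map] using roots_multiset_prod_X_sub_C (M.charpoly.roots.map fun z => z * z)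

theorem trace_mul_self_eq_sum_roots_charpoly (M : Matrix ι ι K) :
    (M * M).trace = (M.charpoly.roots.map fun z => z * z).sum := by
  rw [trace_eq_sum_roots_charpoly, roots_charpoly_mul_self]

end Matrix

lemma Matrix.IsSymm.isHermitian_map_ofReal {ι : Type*} {A : Matrix ι ι ℝ} (hA : A.IsSymm) :
    (A.map ((↑) : ℝ → ℂ)).IsHermitian :=
  (isHermitian_iff_isSymm.mpr hA).map _ fun a => (Complex.conj_ofReal a).symm

section HermitianAddIHermitian

open Complex Set

variable {ι : Type*} [Fintype ι] {H K : Matrix ι ι ℂ} {t : ℂ} {v : ι → ℂ}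

lemma re_mul_re_dotProduct_of_mulVec_eq_smul (hK : K.IsHermitian)
    (hv : (H + I • K) *ᵥ v = t • v) :
    t.re * (star v ⬝ᵥ v).re = (star v ⬝ᵥ H *ᵥ v).re := by
  have hquad : t * (star v ⬝ᵥ v) = star v ⬝ᵥ H *ᵥ v + I * (star v ⬝ᵥ K *ᵥ v) := by
    rw [← smul_eq_mul, ← dotProduct_smul, ← hv, add_mulVec, smul_mulVec, dotProduct_add,
      dotProduct_smul, smul_eq_mul]
  have hK_real : (star v ⬝ᵥ K *ᵥ v).im = 0 := hK.im_star_dotProduct_mulVec_self v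
  have hv_real : (star v ⬝ᵥ v).im = 0 := (nonneg_iff.mp (dotProduct_star_self_nonneg v)).2.symm
  simpa [hK_real, hv_real] using congrArg re hquad

lemma re_mem_Icc_of_mulVec_eq_smul [DecidableEq ι] (hH : H.PosSemidef) (hH₁ : (1 - H).PosSemidef)
    (hK : K.IsHermitian) (hv₀ : v ≠ 0) (hv : (H + I • K) *ᵥ v = t • v) : t.re ∈ Icc 0 1 := by
  have hkey := re_mul_re_dotProduct_of_mulVec_eq_smul hK hv
  have hpos : 0 < (star v ⬝ᵥ v).re := (pos_iff.mp (dotProduct_star_self_pos_iff.mpr hv₀)).1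
  have hH_nonneg : 0 ≤ (star v ⬝ᵥ H *ᵥ v).re := (nonneg_iff.mp (hH.dotProduct_mulVec_nonneg v)).1
  have hH_le : (star v ⬝ᵥ H *ᵥ v).re ≤ (star v ⬝ᵥ v).re := by
    simpa [sub_mulVec, dotProduct_sub] using (nonneg_iff.mp (hH₁.dotProduct_mulVec_nonneg v)).1
  constructor <;> nlinarith

lemma Matrix.PosSemidef.mulVec_eq_zero_of_add_I_smul_mulVec_eq_zero (hH : H.PosSemidef)
    (hK : K.IsHermitian) (hv : (H + I • K) *ᵥ v = 0) : H *ᵥ v = 0 := by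
  have hre := re_mul_re_dotProduct_of_mulVec_eq_smul (t := 0) hK (by rw [hv, zero_smul])
  have him := (nonneg_iff.mp (hH.dotProduct_mulVec_nonneg v)).2
  rw [← hH.dotProduct_mulVec_zero_iff]
  exact Complex.ext (by simpa using hre.symm) (by simpa using him.symm)

end HermitianAddIHermitian

lemma Multiset.nonneg_of_le_of_nsmul_le_sum {α : Type*} [AddCommGroup α] [LinearOrder α]
    [IsOrderedAddMonoid α] {s : Multiset α} {b : α} {k : ℕ} (hcard : card s = k + 1)
    (hle : ∀ x ∈ s, x ≤ b) (hsum : k • b ≤ s.sum) {x : α} (hx : x ∈ s) : 0 ≤ x := by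
  classical
  have hrest : (s.erase x).sum ≤ k • b := by
    have := sum_le_card_nsmul (s.erase x) b fun y hy => hle y (mem_of_mem_erase hy)
    rwa [card_erase_of_mem hx, hcard, Nat.pred_succ] at this
  have h : 0 + (s.erase x).sum ≤ x + (s.erase x).sum := by
    rw [zero_add, sum_erase hx]
    exact hrest.trans hsum
  exact le_of_add_le_add_right h

section SpaceTime

open Set

variable {n : ℕ}

lemma posSemidef_Inmat : (Inmat n).PosSemidef :=
  PosSemidef.diagonal fun i => by split_ifs <;> norm_num

lemma posSemidef_one_sub_Inmat : (1 - Inmat n).PosSemidef := by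
  rw [Inmat, ← diagonal_one, diagonal_sub]
  exact PosSemidef.diagonal fun i => by split_ifs <;> norm_num

lemma re_cmat_apply (A : Matrix (Fin (n+1)) (Fin (n+1)) ℝ) (i j : Fin (n+1)) :
    (cmat A i j).re = if i = j then (if i = 0 then 0 else 1) else 0 := by
  rcases eq_or_ne i j with rfl | hij <;> simp [cmat, Inmat, *, apply_ite]

lemma im_cmat_apply (A : Matrix (Fin (n+1)) (Fin (n+1)) ℝ) (i j : Fin (n+1)) :
    (cmat A i j).im = A i j := by
  rcases eq_or_ne i j with rfl | hij <;> simp [cmat, Inmat, *, apply_ite]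

lemma re_mem_Icc_of_mem_roots_charpoly_cmat {A : Matrix (Fin (n+1)) (Fin (n+1)) ℝ}
    (hA : A.IsSymm) {t : ℂ} (ht : t ∈ (cmat A).charpoly.roots) : t.re ∈ Icc 0 1 := by
  obtain ⟨v, hv₀, hv⟩ := exists_mulVec_eq_smul_of_mem_roots_charpoly ht
  exact re_mem_Icc_of_mulVec_eq_smul posSemidef_Inmat posSemidef_one_sub_Inmat
    hA.isHermitian_map_ofReal hv₀ hv

lemma det_cmat_ne_zero {A : Matrix (Fin (n+1)) (Fin (n+1)) ℝ} (hA : A.IsSymm)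
    (h₀₀ : A 0 0 ≠ 0) : (cmat A).det ≠ 0 := by
  intro hdet
  obtain ⟨v, hv₀, hv⟩ := exists_mulVec_eq_zero_iff.mpr hdet
  have hIv : Inmat n *ᵥ v = 0 :=
    posSemidef_Inmat.mulVec_eq_zero_of_add_I_smul_mulVec_eq_zero hA.isHermitian_map_ofReal hv
  have hAv : A.map ((↑) : ℝ → ℂ) *ᵥ v = 0 := by
    rwa [cmat, add_mulVec, hIv, zero_add, smul_mulVec, smul_eq_zero,
      or_iff_right Complex.I_ne_zero] at hv
  have hsupp : ∀ i, i ≠ 0 → v i = 0 := fun i hi => by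
    simpa [Inmat, mulVec_diagonal, hi] using congrFun hIv i
  have hv0 : v 0 ≠ 0 := fun h0 => hv₀ (funext fun i => by
    rcases eq_or_ne i 0 with rfl | hi
    · exact h0
    · exact hsupp i hi)
  have h := congrFun hAv 0
  rw [mulVec, dotProduct, Finset.sum_eq_single 0 (fun j _ hj => by simp [hsupp j hj])
    (by simp), map_apply] at h
  simp [h₀₀, hv0] at h

lemma im_trace_cmat (A : Matrix (Fin (n+1)) (Fin (n+1)) ℝ) : (cmat A).trace.im = A.trace := by
  simp [trace, im_cmat_apply]

lemma im_trace_cmat_mul_self (A : Matrix (Fin (n+1)) (Fin (n+1)) ℝ) :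
    (cmat A * cmat A).trace.im = 2 * (A.trace - A 0 0) := by
  simp only [trace, diag_apply, mul_apply, Complex.im_sum, Complex.mul_im, re_cmat_apply,
    im_cmat_apply]
  simp only [ite_mul, zero_mul, one_mul, mul_ite, mul_zero, mul_one, Finset.sum_add_distrib,
    Finset.sum_ite_eq, Finset.mem_univ, ↓reduceIte, Finset.sum_ite_eq', Fin.sum_univ_succ,
    Fin.succ_ne_zero, zero_add, add_sub_cancel_left]
  ring

lemma sum_roots_charpoly_cmat_im_mul_one_sub_re (A : Matrix (Fin (n+1)) (Fin (n+1)) ℝ) :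
    ((cmat A).charpoly.roots.map fun z => z.im * (1 - z.re)).sum = A 0 0 := by
  set S := (cmat A).charpoly.roots
  have him_sum (f : ℂ → ℂ) : (S.map fun z => (f z).im).sum = (S.map f).sum.im := by
    simpa [Multiset.map_map] using (map_multiset_sum Complex.imAddGroupHom (S.map f)).symm
  calc (S.map fun z => z.im * (1 - z.re)).sum
      = (S.map fun z => (z - z * z / 2).im).sum := by
        refine congrArg _ (Multiset.map_congr rfl fun z _ => ?_)
        simp only [Complex.sub_im, Complex.div_ofNat_im, Complex.mul_im]
        ring
    _ = (cmat A).trace.im - (cmat A * cmat A).trace.im / 2 := by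
        rw [him_sum, Multiset.sum_map_sub, Multiset.sum_map_div, Multiset.map_id',
          ← trace_eq_sum_roots_charpoly, ← trace_mul_self_eq_sum_roots_charpoly, Complex.sub_im,
          Complex.div_ofNat_im]
    _ = A 0 0 := by rw [im_trace_cmat, im_trace_cmat_mul_self]; ring

end SpaceTime

theorem a00_nonneg_general (n : ℕ) (c : ℝ)
    (hc : (n : ℝ) * π / 2 ≤ c)
    (A : Matrix (Fin (n+1)) (Fin (n+1)) ℝ) (hA : A ∈ calF n c) :
    0 ≤ A 0 0 := by
  obtain ⟨hsym, hΘ⟩ := hA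
  by_contra! h₀₀
  set S := (cmat A).charpoly.roots
  have hre (z : ℂ) (hz : z ∈ S) := re_mem_Icc_of_mem_roots_charpoly_cmat hsym hz
  have hsum : n • (π / 2) ≤ (S.map Complex.arg).sum := by
    rw [spaceTimeAngle, if_neg (det_cmat_ne_zero hsym h₀₀.ne)] at hΘ
    rw [nsmul_eq_mul]
    linarith
  have harg (z : ℂ) (hz : z ∈ S) : 0 ≤ Complex.arg z := by
    refine Multiset.nonneg_of_le_of_nsmul_le_sum (by simp [S, card_roots_charpoly]) ?_ hsum
      (Multiset.mem_map_of_mem _ hz)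
    simp only [Multiset.mem_map, forall_exists_index, and_imp, forall_apply_eq_imp_iff₂]
    exact fun z hz => (abs_le.mp (Complex.abs_arg_le_pi_div_two_iff.mpr (hre z hz).1)).2
  have hpos : 0 ≤ (S.map fun z => z.im * (1 - z.re)).sum :=
    Multiset.sum_nonneg fun x hx => by
      obtain ⟨z, hz, rfl⟩ := Multiset.mem_map.mp hx
      exact mul_nonneg (Complex.arg_nonneg_iff.mp (harg z hz)) (sub_nonneg.mpr (hre z hz).2)
  rw [sum_roots_charpoly_cmat_im_mul_one_sub_re] at hpos
  linarith

/-- Let `n ≥ 1` and `c ∈ [nπ/2, (n+1)π/2)`.  If `A ∈ ℱ_c`, i.e. `A ∈ Sym(ℝ^{n+1})` with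
`Θ̃(A) ≥ c`, then `a₀₀ ≥ 0`. -/
theorem a00_nonneg (n : ℕ) (hn : 1 ≤ n) (c : ℝ)
    (hc : (n : ℝ) * π / 2 ≤ c) (hc' : c < ((n : ℝ) + 1) * π / 2)
    (A : Matrix (Fin (n+1)) (Fin (n+1)) ℝ) (hA : A ∈ calF n c) :
    0 ≤ A 0 0 :=
  a00_nonneg_general n c hc A hA
end

section
/- Partial convexity: Let D ⊂ ℝⁿ be a bounded domain, I ⊂ ℝ an open interval, and c ∈ [nπ/2, (n+1)π/2). If u ∈ ℱ_c(I × D), then for every x ∈ D the function t ↦ u(t, x) is convex on I. -/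
open Real Filter Matrix

/-! The barrier `v(t, x) = -(β + m t) - C |x - x₀|²` has Hessian `diag(0, -2C, …, -2C)`. Its
negative is the limit as `s ↓ 0` of `diag(-s, 2C, …, 2C)`, whose space-time angle is at most
`-π/2 + n π/2 < c`; so the Hessian lies in the dual `ℱ̃_c` and `u + v` is subaffine. On a thin
cylinder `[t₁, t₂] × B̄(x₀, r)`, upper semicontinuity of `u` at the two ends (for small `r`) and a
large `C` (on the lateral side) give `u + v ≤ 0` on the boundary, hence `u(t, x₀) ≤ β + m t` on the
axis for every line `t ↦ β + m t` lying strictly above `u` at both ends. Taking the line through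
`(t₁, p)` and `(t₂, q)` and letting the reals `p > u(t₁, x₀)`, `q > u(t₂, x₀)` decrease gives the
convexity inequality in `[-∞, ∞)`. -/

open Topology Set Metric

theorem EReal.exists_real_gt_coe_mul_lt {a : ℝ} (ha : 0 ≤ a) {A c : EReal} (hA : A ≠ ⊤)
    (h : a * A < c) : ∃ p : ℝ, A < p ∧ a * p < c := by
  rcases ha.eq_or_lt with rfl | ha
  · obtain ⟨p, hp, -⟩ := EReal.exists_between_coe_real (lt_top_iff_ne_top.2 hA)
    exact ⟨p, hp, by simpa using h⟩
  have hdiv (x : EReal) : x < c / a ↔ a * x < c := by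
    rw [EReal.lt_div_iff (EReal.coe_pos.2 ha) (EReal.coe_ne_top a), mul_comm]
  obtain ⟨p, hAp, hpc⟩ := EReal.exists_between_coe_real ((hdiv A).2 h)
  exact ⟨p, hAp, (hdiv p).1 hpc⟩

theorem EReal.le_coe_mul_add_coe_mul_of_forall_gt {a b : ℝ} (ha : 0 ≤ a) (hb : 0 ≤ b)
    {A B X : EReal} (hA : A ≠ ⊤) (hB : B ≠ ⊤) (h : ∀ p q : ℝ, A < p → B < q → X ≤ ↑(a * p + b * q)) :
    X ≤ a * A + b * B := by
  refine EReal.le_add_of_forall_gt (.inr ?_) (.inl ?_) fun a' ha' b' hb' => ?_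
  · simp [EReal.mul_ne_top, hB, hb]
  · simp [EReal.mul_ne_top, hA, ha]
  obtain ⟨p, hAp, hp⟩ := EReal.exists_real_gt_coe_mul_lt ha hA ha'
  obtain ⟨q, hBq, hq⟩ := EReal.exists_real_gt_coe_mul_lt hb hB hb'
  calc X ≤ ↑(a * p + b * q) := h p q hAp hBq
    _ = a * p + b * q := by norm_cast
    _ ≤ a' + b' := add_le_add hp.le hq.le

theorem UpperSemicontinuousOn.exists_dist_lt {α β : Type*} [PseudoMetricSpace α] [Preorder β]
    {U : Set α} {u : α → β} {z : α} (hu : UpperSemicontinuousOn u U) (hz : z ∈ U) {r : β}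
    (hr : u z < r) : ∃ ε > 0, ∀ y ∈ U, dist y z < ε → u y < r := by
  obtain ⟨ε, hε, h⟩ := Metric.eventually_nhds_iff.1 (eventually_nhdsWithin_iff.1 (hu z hz r hr))
  exact ⟨ε, hε, fun y hy hyz => h hyz hy⟩

theorem UpperSemicontinuousOn.exists_le_coe {α : Type*} [TopologicalSpace α] {u : α → EReal}
    {K : Set α} (hu : UpperSemicontinuousOn u K) (hK : IsCompact K) (htop : ∀ y ∈ K, u y ≠ ⊤) :
    ∃ M : ℝ, ∀ y ∈ K, u y ≤ M := by
  rcases K.eq_empty_or_nonempty with rfl | hne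
  · exact ⟨0, by simp⟩
  obtain ⟨y₀, hy₀, hmax⟩ := hu.exists_isMaxOn hne hK
  exact ⟨(u y₀).toReal, fun y hy => (hmax hy).trans (EReal.le_coe_toReal (htop y₀ hy₀))⟩

open Polynomial in
theorem Matrix.roots_charpoly_diagonal {R ι : Type*} [CommRing R] [IsDomain R] [Fintype ι]
    [DecidableEq ι] (d : ι → R) : (diagonal d).charpoly.roots = Finset.univ.val.map d := by
  rw [charpoly_diagonal, Finset.prod_eq_multiset_prod, ← Function.comp_def (fun a => X - C a) d,
    ← Multiset.map_map, roots_multiset_prod_X_sub_C]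

theorem cmat_diagonal {n : ℕ} (d : Fin (n+1) → ℝ) :
    cmat (diagonal d) = diagonal fun i => (if i = 0 then 0 else 1) + Complex.I * d i := by
  rw [cmat, Inmat, diagonal_map (by simp), ← diagonal_smul, ← diagonal_add]
  rfl

theorem spaceTimeAngle_diagonal {n : ℕ} {d : Fin (n+1) → ℝ} (hd : d 0 ≠ 0) :
    spaceTimeAngle (diagonal d) =
      ∑ i, Complex.arg ((if i = 0 then 0 else 1) + Complex.I * d i) := by
  have hdet : (cmat (diagonal d)).det ≠ 0 := by
    rw [cmat_diagonal, det_diagonal, Finset.prod_ne_zero_iff]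
    intro i _
    rcases Fin.eq_zero_or_eq_succ i with rfl | ⟨j, rfl⟩
    · simpa [Complex.ext_iff] using hd
    · simp [Complex.ext_iff, Fin.succ_ne_zero]
  rw [spaceTimeAngle, if_neg hdet, cmat_diagonal, Matrix.roots_charpoly_diagonal, Multiset.map_map]
  rfl

theorem spaceTimeAngle_diagonal_lt {n : ℕ} {d : Fin (n+1) → ℝ} (hd : d 0 < 0) :
    spaceTimeAngle (diagonal d) < n * π / 2 := by
  rw [spaceTimeAngle_diagonal hd.ne, Fin.sum_univ_succ]
  have h0 : Complex.arg ((if (0 : Fin (n+1)) = 0 then 0 else 1) + Complex.I * d 0) = -(π / 2) := by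
    rw [Complex.arg_eq_neg_pi_div_two_iff]
    simp [hd]
  have hsucc : ∑ j : Fin n, Complex.arg ((if j.succ = 0 then 0 else 1) + Complex.I * d j.succ)
      ≤ n * (π / 2) := by
    refine (Finset.sum_le_card_nsmul _ _ (π / 2) fun j _ => ?_).trans_eq (by simp)
    refine (Complex.arg_lt_pi_div_two_iff.2 (Or.inl ?_)).le
    simp [Fin.succ_ne_zero]
  linarith [pi_pos]

theorem diagonal_mem_dualSub_calF {n : ℕ} {c : ℝ} (hc : n * π / 2 ≤ c) {d : Fin (n+1) → ℝ}
    (hd : d 0 = 0) : diagonal d ∈ dualSub (calF n c) := by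
  refine ⟨isSymm_diagonal d, fun ⟨_, hint⟩ => ?_⟩
  let perturb (s : ℝ) : Matrix (Fin (n+1)) (Fin (n+1)) ℝ := diagonal (Function.update (-d) 0 (-s))
  have h0 : perturb 0 = -diagonal d := by
    have : Function.update (-d) 0 (-0) = -d := by
      rw [← hd, ← Pi.neg_apply (f := d), Function.update_eq_self]
    simp only [perturb, this, diagonal_neg]
    rfl
  have hnear : ∀ᶠ s in 𝓝 (0 : ℝ), perturb s ∈ calF n c := by
    rw [← h0] at hint
    have hcont : Continuous perturb := by fun_prop
    exact ((hcont.tendsto 0).eventually hint).mono fun s hs => hs (isSymm_diagonal _)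
  obtain ⟨s, ⟨_, hs⟩, hpos⟩ := ((hnear.filter_mono nhdsWithin_le_nhds).and
    (self_mem_nhdsWithin : ∀ᶠ s in 𝓝[>] (0 : ℝ), 0 < s)).exists
  have := spaceTimeAngle_diagonal_lt (d := Function.update (-d) 0 (-s)) (by simpa using hpos)
  linarith

theorem hessianMatrix_eq_of_hasFDerivAt {m : ℕ} {f : (Fin m → ℝ) → ℝ}
    {f' : (Fin m → ℝ) → (Fin m → ℝ) →L[ℝ] ℝ} {f'' : (Fin m → ℝ) →L[ℝ] (Fin m → ℝ) →L[ℝ] ℝ}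
    {x : Fin m → ℝ} (hf : ∀ y, HasFDerivAt f (f' y) y) (hf' : HasFDerivAt f' f'' x) :
    hessianMatrix f x = of fun i j => f'' (Pi.single i 1) (Pi.single j 1) := by
  ext i j
  simp [hessianMatrix, iteratedFDeriv_two_apply, funext fun y => (hf y).fderiv, hf'.fderiv]

theorem hessianMatrix_add_sum_mul_sq {m : ℕ} (κ : ℝ) (L : (Fin m → ℝ) →L[ℝ] ℝ)
    (d z x : Fin m → ℝ) :
    hessianMatrix (fun y => κ + L y + ∑ i, d i * (y i - z i) ^ 2) x = Matrix.diagonal (2 * d) := by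
  let P (i : Fin m) : (Fin m → ℝ) →L[ℝ] ℝ := ContinuousLinearMap.proj i
  have hf (y : Fin m → ℝ) : HasFDerivAt (fun y => κ + L y + ∑ i, d i * (y i - z i) ^ 2)
      (L + ∑ i, (2 * d i * (y i - z i)) • P i) y := by
    refine ((L.hasFDerivAt.const_add κ).add (HasFDerivAt.fun_sum fun i _ => ?_))
    have := (((P i).hasFDerivAt (x := y)).sub_const (z i)).pow 2 |>.const_mul (d i)
    refine this.congr_fderiv ?_
    ext v
    simp [P]
    ring
  have hf' : HasFDerivAt (fun y => L + ∑ i, (2 * d i * (y i - z i)) • P i)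
      (∑ i, ((2 * d i) • P i).smulRight (P i)) x := by
    refine (HasFDerivAt.fun_sum fun i _ => ?_).const_add L
    exact ((((P i).hasFDerivAt (x := x)).sub_const (z i)).const_mul (2 * d i)).smul_const (P i)
  rw [hessianMatrix_eq_of_hasFDerivAt hf hf']
  ext i j
  simp [P, Pi.single_apply, diagonal_apply]

def consProd {n : ℕ} (S : Set ℝ) (T : Set (Fin n → ℝ)) : Set (Fin (n+1) → ℝ) :=
  {y | y 0 ∈ S ∧ Fin.tail y ∈ T}

section consProd

variable {n : ℕ} {S : Set ℝ} {T : Set (Fin n → ℝ)}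

theorem consProd_eq_preimage :
    consProd S T = (Fin.consEquivL ℝ fun _ : Fin (n+1) => ℝ).toHomeomorph.symm ⁻¹' (S ×ˢ T) :=
  rfl

@[simp]
theorem cons_mem_consProd {t : ℝ} {x : Fin n → ℝ} :
    (Fin.cons t x : Fin (n+1) → ℝ) ∈ consProd S T ↔ t ∈ S ∧ x ∈ T := by
  simp [consProd]

theorem consProd_subset_consProd {S' : Set ℝ} {T' : Set (Fin n → ℝ)} (hS : S ⊆ S') (hT : T ⊆ T') :
    consProd S T ⊆ consProd S' T' :=
  fun _ hy => ⟨hS hy.1, hT hy.2⟩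

theorem IsCompact.consProd (hS : IsCompact S) (hT : IsCompact T) : IsCompact (consProd S T) := by
  rw [consProd_eq_preimage, Homeomorph.isCompact_preimage]
  exact hS.prod hT

theorem frontier_consProd :
    frontier (consProd S T) =
      consProd (closure S) (frontier T) ∪ consProd (frontier S) (closure T) := by
  rw [consProd_eq_preimage, ← Homeomorph.preimage_frontier, frontier_prod_eq]
  rfl

theorem frontier_consProd_Icc_closedBall_subset {t₁ t₂ : ℝ} (h12 : t₁ ≤ t₂) (x₀ : Fin n → ℝ)
    (r : ℝ) : frontier (consProd (Icc t₁ t₂) (closedBall x₀ r)) ⊆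
      consProd (Icc t₁ t₂) (sphere x₀ r) ∪ consProd {t₁, t₂} (closedBall x₀ r) := by
  rw [frontier_consProd, closure_Icc, isClosed_closedBall.closure_eq, frontier_Icc h12]
  exact union_subset_union_left _ (consProd_subset_consProd subset_rfl
    frontier_closedBall_subset_sphere)

end consProd

theorem dist_cons_cons_le {n : ℕ} (t : ℝ) (x x' : Fin n → ℝ) :
    dist (Fin.cons t x : Fin (n+1) → ℝ) (Fin.cons t x') ≤ dist x x' := by
  refine (dist_pi_le_iff dist_nonneg).2 fun i => ?_
  induction i using Fin.cases with
  | zero => simp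
  | succ j => simpa using dist_le_pi_dist x x' j

theorem sq_dist_le_sum_sq {n : ℕ} (x x' : Fin n → ℝ) : dist x x' ^ 2 ≤ ∑ j, (x j - x' j) ^ 2 := by
  have hle : dist x x' ≤ √(∑ j, (x j - x' j) ^ 2) := by
    refine (dist_pi_le_iff (sqrt_nonneg _)).2 fun j => ?_
    rw [Real.dist_eq, ← sqrt_sq_eq_abs]
    exact sqrt_le_sqrt (Finset.single_le_sum (f := fun j => (x j - x' j) ^ 2)
      (fun j _ => sq_nonneg _) (Finset.mem_univ j))
  calc dist x x' ^ 2 ≤ √(∑ j, (x j - x' j) ^ 2) ^ 2 := pow_le_pow_left₀ dist_nonneg hle 2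
    _ = ∑ j, (x j - x' j) ^ 2 := sq_sqrt (Finset.sum_nonneg fun j _ => sq_nonneg _)

theorem IsTypeF.le_neg_of_le_neg_on_frontier {m : ℕ} {F : Set (Matrix (Fin m) (Fin m) ℝ)}
    {U K : Set (Fin m → ℝ)} {u : (Fin m → ℝ) → EReal} {v : (Fin m → ℝ) → ℝ}
    (hu : IsTypeF F U u) (hv : ContDiffOn ℝ 2 v U)
    (hvF : ∀ x ∈ U, hessianMatrix v x ∈ dualSub F) (hK : IsCompact K) (hKU : K ⊆ U)
    (hfr : ∀ y ∈ frontier K, u y ≤ ↑(-v y)) : ∀ y ∈ K, u y ≤ ↑(-v y) := by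
  have hiff (y : Fin m → ℝ) :
      u y ≤ ↑(-v y) ↔ u y + ↑(v y) ≤ ((AffineMap.const ℝ (Fin m → ℝ) (0 : ℝ) y : ℝ) : EReal) := by
    rw [AffineMap.const_apply, EReal.coe_neg, EReal.coe_zero, ← zero_sub,
      EReal.le_sub_iff_add_le (by simp) (by simp)]
  intro y hy
  exact (hiff y).2 (hu.2.2 v hv hvF _ K hK hKU (fun y hy => (hiff y).1 (hfr y hy)) y hy)

def barrier {n : ℕ} (β m C : ℝ) (x₀ : Fin n → ℝ) (y : Fin (n+1) → ℝ) : ℝ :=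
  -(β + m * y 0) - C * ∑ j, (y j.succ - x₀ j) ^ 2

@[simp]
theorem barrier_cons {n : ℕ} (β m C : ℝ) (x₀ : Fin n → ℝ) (t : ℝ) (x : Fin n → ℝ) :
    barrier β m C x₀ (Fin.cons t x) = -(β + m * t) - C * ∑ j, (x j - x₀ j) ^ 2 := by
  simp [barrier]

theorem contDiff_barrier {n : ℕ} (β m C : ℝ) (x₀ : Fin n → ℝ) :
    ContDiff ℝ 2 (barrier β m C x₀) := by
  unfold barrier
  fun_prop

theorem hessianMatrix_barrier_mem_dualSub {n : ℕ} {c : ℝ} (hc : n * π / 2 ≤ c) (β m C : ℝ)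
    (x₀ : Fin n → ℝ) (y : Fin (n+1) → ℝ) :
    hessianMatrix (barrier β m C x₀) y ∈ dualSub (calF n c) := by
  have : barrier β m C x₀ = fun y => -β + ((-m) • ContinuousLinearMap.proj 0 : _ →L[ℝ] ℝ) y +
      ∑ i, (Fin.cons 0 fun _ => -C : Fin (n+1) → ℝ) i *
        (y i - (Fin.cons 0 x₀ : Fin (n+1) → ℝ) i) ^ 2 := by
    funext y
    simp [barrier, Fin.sum_univ_succ, Finset.mul_sum]
    ring
  rw [this, hessianMatrix_add_sum_mul_sq]
  exact diagonal_mem_dualSub_calF hc (by simp)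

theorem IsTypeF.le_affine_of_le_on_ends {n : ℕ} {c : ℝ} (hc : n * π / 2 ≤ c) {I : Set ℝ}
    (hI : Convex ℝ I) {D : Set (Fin n → ℝ)} {u : (Fin (n+1) → ℝ) → EReal}
    (hu : IsTypeF (calF n c) (consProd I D) u) {x₀ : Fin n → ℝ} {r : ℝ} (hr : 0 < r)
    (hrD : closedBall x₀ r ⊆ D) {t₁ t₂ : ℝ} (ht₁ : t₁ ∈ I) (ht₂ : t₂ ∈ I) (h12 : t₁ ≤ t₂)
    {β m : ℝ} (h₁ : ∀ x ∈ closedBall x₀ r, u (Fin.cons t₁ x) ≤ ↑(β + m * t₁))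
    (h₂ : ∀ x ∈ closedBall x₀ r, u (Fin.cons t₂ x) ≤ ↑(β + m * t₂))
    {t : ℝ} (ht : t ∈ Icc t₁ t₂) : u (Fin.cons t x₀) ≤ ↑(β + m * t) := by
  set K := consProd (Icc t₁ t₂) (closedBall x₀ r)
  have hKU : K ⊆ consProd I D := consProd_subset_consProd (hI.ordConnected.out ht₁ ht₂) hrD
  have hK : IsCompact K := isCompact_Icc.consProd (isCompact_closedBall _ _)
  obtain ⟨M, hM⟩ := (hu.2.1.mono hKU).exists_le_coe hK fun y hy => hu.1 y (hKU hy)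
  have hℓ : ∀ s ∈ Icc t₁ t₂, min (β + m * t₁) (β + m * t₂) ≤ β + m * s := by
    rintro s ⟨hs₁, hs₂⟩
    rcases le_total 0 m with hm | hm
    · exact (min_le_left _ _).trans (by nlinarith)
    · exact (min_le_right _ _).trans (by nlinarith)
  set C := max 0 ((M - min (β + m * t₁) (β + m * t₂)) / r ^ 2)
  have hC₀ : 0 ≤ C := le_max_left _ _
  have hC : M - min (β + m * t₁) (β + m * t₂) ≤ C * r ^ 2 :=
    (div_le_iff₀ (by positivity)).1 (le_max_right _ _)
  refine (hu.le_neg_of_le_neg_on_frontier (v := barrier β m C x₀)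
    (contDiff_barrier β m C x₀).contDiffOn (fun y _ => hessianMatrix_barrier_mem_dualSub hc ..)
    hK hKU ?_ _ (by simp [K, ht, hr.le])).trans_eq (by simp)
  intro y hy
  obtain ⟨s, x, rfl⟩ : ∃ s x, y = Fin.cons s x := ⟨y 0, Fin.tail y, (Fin.cons_self_tail y).symm⟩
  have hv : -barrier β m C x₀ (Fin.cons s x) = β + m * s + C * ∑ j, (x j - x₀ j) ^ 2 := by
    simp only [barrier_cons]
    ring
  have hsum : 0 ≤ C * ∑ j, (x j - x₀ j) ^ 2 := by positivity
  rw [hv]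
  replace hy := frontier_consProd_Icc_closedBall_subset h12 x₀ r hy
  simp only [Set.mem_union, cons_mem_consProd] at hy
  rcases hy with ⟨hs, hx⟩ | ⟨hs, hx⟩
  · replace hx : dist x x₀ = r := hx
    refine (hM _ (by simp [K, hs, hx])).trans (EReal.coe_le_coe_iff.2 ?_)
    nlinarith [hℓ s hs, hx ▸ sq_dist_le_sum_sq x x₀]
  · refine le_trans ?_ (EReal.coe_le_coe_iff.2 (le_add_of_nonneg_right hsum))
    rcases hs with rfl | rfl
    exacts [h₁ x hx, h₂ x hx]

theorem IsTypeF.le_affine_of_lt_at_ends {n : ℕ} {c : ℝ} (hc : n * π / 2 ≤ c) {I : Set ℝ}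
    (hI : Convex ℝ I) {D : Set (Fin n → ℝ)} (hD : IsOpen D) {u : (Fin (n+1) → ℝ) → EReal}
    (hu : IsTypeF (calF n c) (consProd I D) u) {x₀ : Fin n → ℝ} (hx₀ : x₀ ∈ D) {t₁ t₂ : ℝ}
    (ht₁ : t₁ ∈ I) (ht₂ : t₂ ∈ I) (h12 : t₁ ≤ t₂) {β m : ℝ}
    (h₁ : u (Fin.cons t₁ x₀) < ↑(β + m * t₁)) (h₂ : u (Fin.cons t₂ x₀) < ↑(β + m * t₂))
    {t : ℝ} (ht : t ∈ Icc t₁ t₂) : u (Fin.cons t x₀) ≤ ↑(β + m * t) := by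
  obtain ⟨ε₁, hε₁, hu₁⟩ := hu.2.1.exists_dist_lt (by simp [ht₁, hx₀]) h₁
  obtain ⟨ε₂, hε₂, hu₂⟩ := hu.2.1.exists_dist_lt (by simp [ht₂, hx₀]) h₂
  obtain ⟨ε, hε, hεD⟩ := Metric.isOpen_iff.1 hD x₀ hx₀
  obtain ⟨r, hr, hrε⟩ := exists_between (lt_min hε (lt_min hε₁ hε₂))
  simp only [lt_min_iff] at hrε
  have hrD : closedBall x₀ r ⊆ D := (closedBall_subset_ball hrε.1).trans hεD
  refine hu.le_affine_of_le_on_ends hc hI hr hrD ht₁ ht₂ h12 (fun x hx => ?_) (fun x hx => ?_) ht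
  · refine (hu₁ _ (by simp [ht₁, hrD hx]) ?_).le
    exact (dist_cons_cons_le t₁ x x₀).trans_lt (lt_of_le_of_lt hx hrε.2.1)
  · refine (hu₂ _ (by simp [ht₂, hrD hx]) ?_).le
    exact (dist_cons_cons_le t₂ x x₀).trans_lt (lt_of_le_of_lt hx hrε.2.2)

theorem IsTypeF.le_combo_of_lt {n : ℕ} {c : ℝ} (hc : n * π / 2 ≤ c) {I : Set ℝ}
    (hI : Convex ℝ I) {D : Set (Fin n → ℝ)} (hD : IsOpen D) {u : (Fin (n+1) → ℝ) → EReal}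
    (hu : IsTypeF (calF n c) (consProd I D) u) {x₀ : Fin n → ℝ} (hx₀ : x₀ ∈ D) {t₁ t₂ : ℝ}
    (ht₁ : t₁ ∈ I) (ht₂ : t₂ ∈ I) {p q : ℝ} (hp : u (Fin.cons t₁ x₀) < p)
    (hq : u (Fin.cons t₂ x₀) < q) {a b : ℝ} (ha : 0 ≤ a) (hb : 0 ≤ b) (hab : a + b = 1) :
    u (Fin.cons (a * t₁ + b * t₂) x₀) ≤ ↑(a * p + b * q) := by
  wlog h12 : t₁ ≤ t₂ generalizing t₁ t₂ p q a b
  · have := this ht₂ ht₁ hq hp hb ha (by linarith) (le_of_not_ge h12)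
    rwa [add_comm (b * t₂), add_comm (b * q)] at this
  rcases h12.eq_or_lt with rfl | hlt
  · obtain rfl : a = 1 - b := by linarith
    rw [← add_mul, hab, one_mul]
    rcases le_total p q with hpq | hpq
    · exact hp.le.trans (EReal.coe_le_coe_iff.2 (by nlinarith))
    · exact hq.le.trans (EReal.coe_le_coe_iff.2 (by nlinarith))
  set m := (q - p) / (t₂ - t₁)
  have hm : m * (t₂ - t₁) = q - p := div_mul_cancel₀ _ (sub_pos.2 hlt).ne'
  have hend₁ : p - m * t₁ + m * t₁ = p := by ring
  have hend₂ : p - m * t₁ + m * t₂ = q := by linear_combination hm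
  have hmid : p - m * t₁ + m * (a * t₁ + b * t₂) = a * p + b * q := by
    linear_combination b * hm + (m * t₁ - p) * hab
  rw [← hmid]
  refine hu.le_affine_of_lt_at_ends hc hI hD hx₀ ht₁ ht₂ h12 (by rwa [hend₁]) (by rwa [hend₂]) ?_
  simpa using convex_Icc t₁ t₂ (left_mem_Icc.2 h12) (right_mem_Icc.2 h12) ha hb hab

theorem partial_convexity_general (n : ℕ) (c : ℝ)
    (hc : (n : ℝ) * π / 2 ≤ c)
    (I : Set ℝ) (hIconv : Convex ℝ I)
    (D : Set (Fin n → ℝ)) (hDopen : IsOpen D)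
    (u : (Fin (n+1) → ℝ) → EReal)
    (hu : IsTypeF (calF n c) {y | y 0 ∈ I ∧ Fin.tail y ∈ D} u) :
    ∀ x ∈ D, ∀ t₁ ∈ I, ∀ t₂ ∈ I, ∀ a b : ℝ, 0 ≤ a → 0 ≤ b → a + b = 1 →
      u (Fin.cons (a * t₁ + b * t₂) x) ≤
        (a : EReal) * u (Fin.cons t₁ x) + (b : EReal) * u (Fin.cons t₂ x) := by
  intro x hx t₁ ht₁ t₂ ht₂ a b ha hb hab
  have hu' : IsTypeF (calF n c) (consProd I D) u := hu
  refine EReal.le_coe_mul_add_coe_mul_of_forall_gt ha hb (hu.1 _ (by simp [ht₁, hx]))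
    (hu.1 _ (by simp [ht₂, hx])) fun p q hp hq => ?_
  exact hu'.le_combo_of_lt hc hIconv hDopen hx ht₁ ht₂ hp hq ha hb hab

/-- **Partial convexity.**  Let `D ⊂ ℝⁿ` be a bounded domain, `I ⊂ ℝ` an open interval
and `c ∈ [nπ/2, (n+1)π/2)`.  If `u ∈ ℱ_c(I × D)`, then for every `x ∈ D` the function
`t ↦ u(t, x)` is convex on `I` (stated as the convexity inequality for the
`EReal`-valued function `u`). -/
theorem partial_convexity (n : ℕ) (c : ℝ)
    (hc : (n : ℝ) * π / 2 ≤ c) (hc' : c < ((n : ℝ) + 1) * π / 2)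
    (I : Set ℝ) (hIopen : IsOpen I) (hIconv : Convex ℝ I) (hIne : I.Nonempty)
    (D : Set (Fin n → ℝ)) (hDopen : IsOpen D) (hDconn : IsConnected D)
    (hDbdd : Bornology.IsBounded D)
    (u : (Fin (n+1) → ℝ) → EReal)
    (hu : IsTypeF (calF n c) {y | y 0 ∈ I ∧ Fin.tail y ∈ D} u) :
    ∀ x ∈ D, ∀ t₁ ∈ I, ∀ t₂ ∈ I, ∀ a b : ℝ, 0 ≤ a → 0 ≤ b → a + b = 1 →
      u (Fin.cons (a * t₁ + b * t₂) x) ≤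
        (a : EReal) * u (Fin.cons t₁ x) + (b : EReal) * u (Fin.cons t₂ x) :=
  partial_convexity_general n c hc I hIconv D hDopen u hu
end

section
/- Let I ⊂ ℝ be an open interval, D ⊂ ℝⁿ a domain, and f ∈ C²(I × D) with ∂²f/∂t²(t, x) > 0 for all (t, x) ∈ I × D. Suppose that for each x ∈ D the function t ↦ f(t, x) attains its infimum over I at a (necessarily unique) point t(x) ∈ I, and set g(x) := f(t(x), x). Then for all x ∈ D: det( I + i ∇²g(x) ) = det( I_n + i ∇²f(t(x), x) ) / ( i ∂²_t f(t(x), x) ), where ∇²f denotes the full (n+1)×(n+1) Hessian of f in the variables (t, x), ∇²g the n×n Hessian of g, I the n×n identity matrix, and I_n := diag(0,1,…,1) ∈ Sym(ℝ^{n+1}). -/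
open Real Filter Matrix

/-!
Since `∂²f/∂t² > 0`, the map `t ↦ ∂f/∂t (t, x)` is strictly increasing on `I`, so `t(x)` is the
unique zero of `∂f/∂t (·, x)` in `I`; the implicit function theorem then makes `t` a `C¹` function.
By the envelope theorem `∇g(x) = ∇ₓf(t(x), x)`. Differentiating once more, and differentiating
`∂f/∂t (t(x), x) = 0` to express `∇t`, shows that `∇²g(x)` is the Schur complement of the entry
`∂²f/∂t²` in `∇²f(t(x), x)`. Since `i ∇²g(x) + I` is likewise the Schur complement of the entry
`i ∂²f/∂t²` in `I_n + i ∇²f(t(x), x)`, the formula `det M = M₀₀ · det (M / M₀₀)` gives the claim.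
-/

open scoped Topology

namespace Matrix

variable {K : Type*} [Field K] {n : ℕ}

def schurComplementZero (M : Matrix (Fin (n+1)) (Fin (n+1)) K) : Matrix (Fin n) (Fin n) K :=
  of fun i j => M i.succ j.succ - M i.succ 0 * (M 0 0)⁻¹ * M 0 j.succ

theorem det_eq_mul_det_schurComplementZero (M : Matrix (Fin (n+1)) (Fin (n+1)) K)
    (h : M 0 0 ≠ 0) : M.det = M 0 0 * M.schurComplementZero.det := by
  set c : Fin (n+1) → K := Fin.cons 0 fun i => M i.succ 0 * (M 0 0)⁻¹
  set B : Matrix (Fin (n+1)) (Fin (n+1)) K := of fun i j => M i j - c i * M 0 j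
  have hB0 : ∀ j, B 0 j = M 0 j := by simp [B, c]
  have hcol : ∀ i : Fin n, B i.succ 0 = 0 := fun i => by simp [B, c, h]
  rw [det_eq_of_forall_row_eq_smul_add_const c 0 rfl (B := B) fun i j => by simp [B, hB0],
    det_succ_column_zero, Fin.sum_univ_succ]
  simp only [hcol, mul_zero, zero_mul, Finset.sum_const_zero, add_zero, Fin.val_zero, pow_zero,
    one_mul, hB0, Fin.succAbove_zero]
  rfl

end Matrix

theorem cmat_zero_zero {n : ℕ} (A : Matrix (Fin (n+1)) (Fin (n+1)) ℝ) :
    cmat A 0 0 = Complex.I * A 0 0 := by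
  simp [cmat, Inmat]

theorem schurComplementZero_cmat {n : ℕ} (A : Matrix (Fin (n+1)) (Fin (n+1)) ℝ) :
    (cmat A).schurComplementZero =
      1 + Complex.I • A.schurComplementZero.map (fun a => (a : ℂ)) := by
  ext i j
  simp [Matrix.schurComplementZero, cmat, Inmat, Matrix.one_apply, Matrix.diagonal_apply,
    Fin.succ_ne_zero]
  linear_combination (Complex.I * A i.succ 0 * (A 0 0 : ℂ)⁻¹ * A 0 j.succ) * Complex.I_mul_I

theorem det_cmat {n : ℕ} (A : Matrix (Fin (n+1)) (Fin (n+1)) ℝ) (h : A 0 0 ≠ 0) :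
    (cmat A).det = Complex.I * A 0 0 *
      (1 + Complex.I • A.schurComplementZero.map (fun a => (a : ℂ))).det := by
  have h' : cmat A 0 0 ≠ 0 := by simp [cmat_zero_zero, h]
  rw [Matrix.det_eq_mul_det_schurComplementZero _ h', cmat_zero_zero, schurComplementZero_cmat]

theorem Fin.cons_eq_smul_single_add {R : Type*} [Semiring R] {n : ℕ} (a : R) (v : Fin n → R) :
    (Fin.cons a v : Fin (n+1) → R) = a • Pi.single 0 1 + Fin.cons 0 v := by
  ext i
  induction i using Fin.cases <;> simp

theorem Fin.cons_zero_single {R : Type*} [Semiring R] {n : ℕ} (i : Fin n) :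
    (Fin.cons 0 (Pi.single i 1) : Fin (n+1) → R) = Pi.single i.succ 1 := by
  ext k
  induction k using Fin.cases <;> simp [Pi.single_apply, Fin.succ_ne_zero]

theorem map_finCons {R F G : Type*} [Semiring R] [AddCommMonoid F] [Module R F] {n : ℕ}
    [FunLike G (Fin (n+1) → R) F] [LinearMapClass G R (Fin (n+1) → R) F] (L : G) (a : R)
    (v : Fin n → R) : L (Fin.cons a v) = a • L (Pi.single 0 1) + L (Fin.cons 0 v) := by
  rw [Fin.cons_eq_smul_single_add, map_add, map_smul]

theorem hessianMatrix_apply {m : ℕ} (f : (Fin m → ℝ) → ℝ) (y : Fin m → ℝ) (i j : Fin m) :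
    hessianMatrix f y i j = fderiv ℝ (fderiv ℝ f) y (Pi.single i 1) (Pi.single j 1) := by
  simp [hessianMatrix, iteratedFDeriv_two_apply]

section Calculus

variable {𝕜 : Type*} [NontriviallyNormedField 𝕜] {E F G : Type*}
  [NormedAddCommGroup E] [NormedSpace 𝕜 E] [NormedAddCommGroup F] [NormedSpace 𝕜 F]
  [NormedAddCommGroup G] [NormedSpace 𝕜 G] {n : ℕ}

theorem fderiv_clm_apply_const {c : E → F →L[𝕜] G} {x : E} (hc : DifferentiableAt 𝕜 c x)
    (u : F) (v : E) : fderiv 𝕜 (fun y => c y u) x v = fderiv 𝕜 c x v u := by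
  simp [fderiv_clm_apply hc (differentiableAt_const u)]

theorem hasDerivAt_finCons_left (x : Fin n → 𝕜) (t : 𝕜) :
    HasDerivAt (fun s : 𝕜 => (Fin.cons s x : Fin (n+1) → 𝕜)) (Pi.single 0 1) t := by
  refine hasDerivAt_pi.2 fun i => ?_
  induction i using Fin.cases
  · simpa using hasDerivAt_id' t
  · simpa [Fin.succ_ne_zero] using hasDerivAt_const t _

theorem DifferentiableAt.hasDerivAt_comp_finCons {f : (Fin (n+1) → 𝕜) → F} {x : Fin n → 𝕜}
    {t : 𝕜} (hf : DifferentiableAt 𝕜 f (Fin.cons t x)) :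
    HasDerivAt (fun s => f (Fin.cons s x)) (fderiv 𝕜 f (Fin.cons t x) (Pi.single 0 1)) t :=
  hf.hasFDerivAt.comp_hasDerivAt t (hasDerivAt_finCons_left x t)

theorem HasFDerivAt.comp_finCons_graph {f : (Fin (n+1) → 𝕜) → F}
    {f' : (Fin (n+1) → 𝕜) →L[𝕜] F} {τ : (Fin n → 𝕜) → 𝕜} {x : Fin n → 𝕜}
    (hf : HasFDerivAt f f' (Fin.cons (τ x) x)) (hτ : DifferentiableAt 𝕜 τ x) :
    HasFDerivAt (fun x => f (Fin.cons (τ x) x))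
      (f'.comp ((fderiv 𝕜 τ x).finCons (.id 𝕜 (Fin n → 𝕜)))) x := by
  have hγ : HasFDerivAt (fun x => (Fin.cons (τ x) x : Fin (n+1) → 𝕜))
      ((fderiv 𝕜 τ x).finCons (.id 𝕜 (Fin n → 𝕜))) x :=
    hτ.hasFDerivAt.finCons (hasFDerivAt_id x)
  exact hf.comp (f := fun x => (Fin.cons (τ x) x : Fin (n+1) → 𝕜)) x hγ

end Calculus

theorem contDiffAt_of_eventually_unique_zero {𝕜 E : Type*} [RCLike 𝕜] [NormedAddCommGroup E]
    [NormedSpace 𝕜 E] [CompleteSpace E] {h : E × 𝕜 → 𝕜} {τ : E → 𝕜} {x₀ : E} {a : 𝕜}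
    {k : WithTop ℕ∞} (hh : ContDiffAt 𝕜 k h (x₀, τ x₀)) (hk : k ≠ 0)
    (ha : HasDerivAt (fun t => h (x₀, t)) a (τ x₀)) (ha₀ : a ≠ 0) (h₀ : h (x₀, τ x₀) = 0)
    (huniq : ∀ᶠ p in 𝓝 (x₀, τ x₀), h p = 0 → p.2 = τ p.1) :
    ContDiffAt 𝕜 k τ x₀ := by
  have hL : (fderiv 𝕜 h (x₀, τ x₀) ∘L .inr 𝕜 E 𝕜).IsInvertible := by
    have hpartial : HasDerivAt (fun t => h (x₀, t)) (fderiv 𝕜 h (x₀, τ x₀) (0, 1)) (τ x₀) :=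
      (hh.differentiableAt hk).hasFDerivAt.comp_hasDerivAt _
        ((hasDerivAt_const _ x₀).prodMk (hasDerivAt_id _))
    have hL1 : fderiv 𝕜 h (x₀, τ x₀) (0, 1) = a := hpartial.unique ha
    refine ContinuousLinearMap.IsInvertible.of_inverse (g := a⁻¹ • .id 𝕜 𝕜) ?_ ?_ <;>
    · ext
      simp [hL1, ha₀]
  have hgraph :=
    (continuousAt_id.prodMk (hh.contDiffAt_implicitFunction hk hL).continuousAt).tendsto
  rw [hh.implicitFunction_apply_self hk hL] at hgraph
  refine (hh.contDiffAt_implicitFunction hk hL).congr_of_eventuallyEq ?_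
  filter_upwards [hh.eventually_apply_implicitFunction hk hL, hgraph.eventually huniq]
    with x hx hxu
  exact (hxu (hx.trans h₀)).symm

section TimeDerivative

variable {n : ℕ}

noncomputable def timeDeriv (f : (Fin (n+1) → ℝ) → ℝ) (y : Fin (n+1) → ℝ) : ℝ :=
  fderiv ℝ f y (Pi.single 0 1)

theorem timeDeriv_eq_zero_of_isLocalMin {f : (Fin (n+1) → ℝ) → ℝ} {x : Fin n → ℝ} {t : ℝ}
    (hf : DifferentiableAt ℝ f (Fin.cons t x)) (hmin : IsLocalMin (fun s => f (Fin.cons s x)) t) :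
    timeDeriv f (Fin.cons t x) = 0 :=
  hmin.hasDerivAt_eq_zero hf.hasDerivAt_comp_finCons

theorem hasDerivAt_timeDeriv_finCons {f : (Fin (n+1) → ℝ) → ℝ} {x : Fin n → ℝ} {t : ℝ}
    (hf : ContDiffAt ℝ 2 f (Fin.cons t x)) :
    HasDerivAt (fun s => timeDeriv f (Fin.cons s x)) (hessianMatrix f (Fin.cons t x) 0 0) t := by
  have hd : DifferentiableAt ℝ (fderiv ℝ f) (Fin.cons t x) :=
    (hf.fderiv_right (m := 1) le_rfl).differentiableAt one_ne_zero
  simpa [timeDeriv, hessianMatrix_apply] using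
    hd.hasDerivAt_comp_finCons.clm_apply (hasDerivAt_const t _)

theorem strictMonoOn_timeDeriv_finCons {f : (Fin (n+1) → ℝ) → ℝ} {x : Fin n → ℝ} {I : Set ℝ}
    (hIopen : IsOpen I) (hIconv : Convex ℝ I) (hf : ∀ t ∈ I, ContDiffAt ℝ 2 f (Fin.cons t x))
    (hpos : ∀ t ∈ I, 0 < hessianMatrix f (Fin.cons t x) 0 0) :
    StrictMonoOn (fun s => timeDeriv f (Fin.cons s x)) I := by
  refine strictMonoOn_of_deriv_pos hIconv
    (fun t ht => (hasDerivAt_timeDeriv_finCons (hf t ht)).continuousAt.continuousWithinAt)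
    fun t ht => ?_
  rw [hIopen.interior_eq] at ht
  rw [(hasDerivAt_timeDeriv_finCons (hf t ht)).deriv]
  exact hpos t ht

theorem contDiffAt_timeDeriv_finCons {f : (Fin (n+1) → ℝ) → ℝ} {x : Fin n → ℝ} {t : ℝ}
    (hf : ContDiffAt ℝ 2 f (Fin.cons t x)) :
    ContDiffAt ℝ 1 (fun p : (Fin n → ℝ) × ℝ => timeDeriv f (Fin.cons p.2 p.1)) (x, t) := by
  have hcons : ContDiff ℝ 1 fun p : (Fin n → ℝ) × ℝ => (Fin.cons p.2 p.1 : Fin (n+1) → ℝ) :=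
    contDiff_pi.2 fun i => by
      induction i using Fin.cases
      · simpa using contDiff_snd
      · simp only [Fin.cons_succ]; fun_prop
  exact ((hf.fderiv_right le_rfl).clm_apply contDiffAt_const).comp (x, t) hcons.contDiffAt

end TimeDerivative

section Envelope

variable {n : ℕ} {f : (Fin (n+1) → ℝ) → ℝ} {τ : (Fin n → ℝ) → ℝ}

theorem fderiv_comp_finCons_graph {x : Fin n → ℝ} (hf : DifferentiableAt ℝ f (Fin.cons (τ x) x))
    (hτ : DifferentiableAt ℝ τ x) (hcrit : timeDeriv f (Fin.cons (τ x) x) = 0) :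
    fderiv ℝ (fun x => f (Fin.cons (τ x) x)) x =
      (fderiv ℝ f (Fin.cons (τ x) x)).comp ((0 : (Fin n → ℝ) →L[ℝ] ℝ).finCons (.id ℝ _)) := by
  rw [(hf.hasFDerivAt.comp_finCons_graph hτ).fderiv]
  ext w
  change fderiv ℝ f _ (Fin.cons (fderiv ℝ τ x w) w) = fderiv ℝ f _ (Fin.cons 0 w)
  rw [map_finCons, ← timeDeriv, hcrit, smul_zero, zero_add]

theorem fderiv_fderiv_apply_finCons_graph {x₀ : Fin n → ℝ}
    (hf : DifferentiableAt ℝ (fderiv ℝ f) (Fin.cons (τ x₀) x₀)) (hτ : DifferentiableAt ℝ τ x₀)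
    (u : Fin (n+1) → ℝ) (v : Fin n → ℝ) :
    fderiv ℝ (fun x => fderiv ℝ f (Fin.cons (τ x) x) u) x₀ v =
      fderiv ℝ (fderiv ℝ f) (Fin.cons (τ x₀) x₀) (Fin.cons (fderiv ℝ τ x₀ v) v) u := by
  have hc := hf.hasFDerivAt.comp_finCons_graph hτ
  rw [fderiv_clm_apply_const hc.differentiableAt, hc.fderiv]
  rfl

theorem fderiv_fderiv_comp_finCons_graph_apply {x₀ : Fin n → ℝ}
    (hf : ContDiffAt ℝ 2 f (Fin.cons (τ x₀) x₀)) (hτ : ContDiffAt ℝ 1 τ x₀)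
    (hcrit : ∀ᶠ x in 𝓝 x₀, timeDeriv f (Fin.cons (τ x) x) = 0) (v w : Fin n → ℝ) :
    fderiv ℝ (fderiv ℝ fun x => f (Fin.cons (τ x) x)) x₀ v w =
      fderiv ℝ (fderiv ℝ f) (Fin.cons (τ x₀) x₀) (Fin.cons (fderiv ℝ τ x₀ v) v)
        (Fin.cons 0 w) := by
  set J : (Fin n → ℝ) →L[ℝ] (Fin (n+1) → ℝ) := (0 : (Fin n → ℝ) →L[ℝ] ℝ).finCons (.id ℝ _)
  have hτd : ∀ᶠ x in 𝓝 x₀, DifferentiableAt ℝ τ x :=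
    (hτ.eventually (by simp)).mono fun x hx => hx.differentiableAt one_ne_zero
  have hfd : ∀ᶠ x in 𝓝 x₀, DifferentiableAt ℝ f (Fin.cons (τ x) x) :=
    (hτ.continuousAt.finCons continuousAt_id).eventually
      ((hf.eventually (by simp)).mono fun y hy => hy.differentiableAt two_ne_zero)
  have henv : fderiv ℝ (fun x => f (Fin.cons (τ x) x)) =ᶠ[𝓝 x₀]
      fun x => (fderiv ℝ f (Fin.cons (τ x) x)).comp J := by
    filter_upwards [hfd, hτd, hcrit] with x hfx hτx hx using fderiv_comp_finCons_graph hfx hτx hx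
  have hD2f : DifferentiableAt ℝ (fderiv ℝ f) (Fin.cons (τ x₀) x₀) :=
    (hf.fderiv_right (m := 1) le_rfl).differentiableAt one_ne_zero
  have hτ₀ : DifferentiableAt ℝ τ x₀ := hτ.differentiableAt one_ne_zero
  have hG : DifferentiableAt ℝ (fun x => (fderiv ℝ f (Fin.cons (τ x) x)).comp J) x₀ :=
    (hD2f.hasFDerivAt.comp_finCons_graph hτ₀).differentiableAt.clm_comp (differentiableAt_const J)
  rw [henv.fderiv_eq, ← fderiv_clm_apply_const hG]
  exact fderiv_fderiv_apply_finCons_graph hD2f hτ₀ (J w) v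

theorem fderiv_fderiv_finCons_graph_apply_single_zero {x₀ : Fin n → ℝ}
    (hf : ContDiffAt ℝ 2 f (Fin.cons (τ x₀) x₀)) (hτ : DifferentiableAt ℝ τ x₀)
    (hcrit : ∀ᶠ x in 𝓝 x₀, timeDeriv f (Fin.cons (τ x) x) = 0) (v : Fin n → ℝ) :
    fderiv ℝ (fderiv ℝ f) (Fin.cons (τ x₀) x₀) (Fin.cons (fderiv ℝ τ x₀ v) v)
      (Pi.single 0 1) = 0 := by
  have hD2f : DifferentiableAt ℝ (fderiv ℝ f) (Fin.cons (τ x₀) x₀) :=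
    (hf.fderiv_right (m := 1) le_rfl).differentiableAt one_ne_zero
  have hconst : (fun x => fderiv ℝ f (Fin.cons (τ x) x) (Pi.single 0 1)) =ᶠ[𝓝 x₀]
      fun _ => (0 : ℝ) := hcrit
  rw [← fderiv_fderiv_apply_finCons_graph hD2f hτ, hconst.fderiv_eq]
  simp

theorem hessianMatrix_comp_finCons_graph {x₀ : Fin n → ℝ}
    (hf : ContDiffAt ℝ 2 f (Fin.cons (τ x₀) x₀)) (hτ : ContDiffAt ℝ 1 τ x₀)
    (hcrit : ∀ᶠ x in 𝓝 x₀, timeDeriv f (Fin.cons (τ x) x) = 0)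
    (h₀₀ : hessianMatrix f (Fin.cons (τ x₀) x₀) 0 0 ≠ 0) :
    hessianMatrix (fun x => f (Fin.cons (τ x) x)) x₀ =
      (hessianMatrix f (Fin.cons (τ x₀) x₀)).schurComplementZero := by
  ext i j
  have hcrit₀ := fderiv_fderiv_finCons_graph_apply_single_zero hf (hτ.differentiableAt one_ne_zero)
    hcrit (Pi.single i 1)
  rw [map_finCons, Fin.cons_zero_single] at hcrit₀
  rw [hessianMatrix_apply, fderiv_fderiv_comp_finCons_graph_apply hf hτ hcrit,
    Fin.cons_zero_single, map_finCons (fderiv ℝ (fderiv ℝ f) _),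
    Fin.cons_zero_single]
  set B := fderiv ℝ (fderiv ℝ f) (Fin.cons (τ x₀) x₀)
  simp only [Matrix.schurComplementZero, Matrix.of_apply, hessianMatrix_apply,
    _root_.add_apply, _root_.smul_apply, smul_eq_mul] at h₀₀ hcrit₀ ⊢
  field_simp
  linear_combination B (Pi.single 0 1) (Pi.single j.succ 1) * hcrit₀

end Envelope

theorem det_hessian_formula_general (n : ℕ)
    (I : Set ℝ) (hIopen : IsOpen I) (hIconv : Convex ℝ I)
    (D : Set (Fin n → ℝ)) (hDopen : IsOpen D)
    (f : (Fin (n+1) → ℝ) → ℝ)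
    (hf : ContDiffOn ℝ 2 f {y | y 0 ∈ I ∧ Fin.tail y ∈ D})
    (hftt : ∀ y ∈ {y : Fin (n+1) → ℝ | y 0 ∈ I ∧ Fin.tail y ∈ D},
      0 < hessianMatrix f y 0 0)
    (tfun : (Fin n → ℝ) → ℝ) (htI : ∀ x ∈ D, tfun x ∈ I)
    (hmin : ∀ x ∈ D, ∀ t ∈ I, f (Fin.cons (tfun x) x) ≤ f (Fin.cons t x))
    (g : (Fin n → ℝ) → ℝ) (hg : ∀ x, g x = f (Fin.cons (tfun x) x)) :
    ∀ x ∈ D,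
      Matrix.det ((1 : Matrix (Fin n) (Fin n) ℂ) +
          Complex.I • (hessianMatrix g x).map (fun a => (a : ℂ))) =
        Matrix.det (cmat (hessianMatrix f (Fin.cons (tfun x) x))) /
          (Complex.I * (hessianMatrix f (Fin.cons (tfun x) x) 0 0 : ℂ)) := by
  intro x₀ hx₀
  set U := {y : Fin (n+1) → ℝ | y 0 ∈ I ∧ Fin.tail y ∈ D}
  have hopen : IsOpen U :=
    (hIopen.preimage (continuous_apply 0)).inter
      (hDopen.preimage (by fun_prop : Continuous fun y : Fin (n+1) → ℝ => Fin.tail y))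
  have hmem : ∀ x ∈ D, ∀ t ∈ I, (Fin.cons t x : Fin (n+1) → ℝ) ∈ U :=
    fun x hx t ht => by simpa [U] using ⟨ht, hx⟩
  have hf₂ : ∀ x ∈ D, ∀ t ∈ I, ContDiffAt ℝ 2 f (Fin.cons t x) :=
    fun x hx t ht => hf.contDiffAt (hopen.mem_nhds (hmem x hx t ht))
  have hpos : ∀ x ∈ D, ∀ t ∈ I, 0 < hessianMatrix f (Fin.cons t x) 0 0 :=
    fun x hx t ht => hftt _ (hmem x hx t ht)
  have hcrit : ∀ x ∈ D, timeDeriv f (Fin.cons (tfun x) x) = 0 := fun x hx =>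
    timeDeriv_eq_zero_of_isLocalMin ((hf₂ x hx _ (htI x hx)).differentiableAt two_ne_zero)
      (Filter.mem_of_superset (hIopen.mem_nhds (htI x hx)) (hmin x hx))
  have huniq : ∀ x ∈ D, ∀ t ∈ I, timeDeriv f (Fin.cons t x) = 0 → t = tfun x :=
    fun x hx t ht h0 => (strictMonoOn_timeDeriv_finCons hIopen hIconv (hf₂ x hx) (hpos x hx)).injOn
      ht (htI x hx) (h0.trans (hcrit x hx).symm)
  have hf₀ := hf₂ x₀ hx₀ _ (htI x₀ hx₀)
  have h₀₀ := (hpos x₀ hx₀ _ (htI x₀ hx₀)).ne'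
  have hτ : ContDiffAt ℝ 1 tfun x₀ :=
    contDiffAt_of_eventually_unique_zero (contDiffAt_timeDeriv_finCons hf₀) one_ne_zero
      (hasDerivAt_timeDeriv_finCons hf₀) h₀₀ (hcrit x₀ hx₀)
      (Filter.mem_of_superset (prod_mem_nhds (hDopen.mem_nhds hx₀) (hIopen.mem_nhds (htI x₀ hx₀)))
        fun p hp => huniq p.1 hp.1 p.2 hp.2)
  obtain rfl : g = fun x => f (Fin.cons (tfun x) x) := funext hg
  rw [hessianMatrix_comp_finCons_graph hf₀ hτ
      (Filter.mem_of_superset (hDopen.mem_nhds hx₀) hcrit) h₀₀,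
    det_cmat _ h₀₀, mul_div_cancel_left₀ _ (by simpa using h₀₀)]

/-- Under the hypotheses of the minimum lemma, for all `x ∈ D`,
`det(I + i ∇²g(x)) = det(I_n + i ∇²f(t(x),x)) / (i ∂²_t f(t(x),x))`. -/
theorem det_hessian_formula (n : ℕ)
    (I : Set ℝ) (hIopen : IsOpen I) (hIconv : Convex ℝ I) (hIne : I.Nonempty)
    (D : Set (Fin n → ℝ)) (hDopen : IsOpen D) (hDconn : IsConnected D)
    (f : (Fin (n+1) → ℝ) → ℝ)
    (hf : ContDiffOn ℝ 2 f {y | y 0 ∈ I ∧ Fin.tail y ∈ D})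
    (hftt : ∀ y ∈ {y : Fin (n+1) → ℝ | y 0 ∈ I ∧ Fin.tail y ∈ D},
      0 < hessianMatrix f y 0 0)
    (tfun : (Fin n → ℝ) → ℝ) (htI : ∀ x ∈ D, tfun x ∈ I)
    (hmin : ∀ x ∈ D, ∀ t ∈ I, f (Fin.cons (tfun x) x) ≤ f (Fin.cons t x))
    (g : (Fin n → ℝ) → ℝ) (hg : ∀ x, g x = f (Fin.cons (tfun x) x)) :
    ∀ x ∈ D,
      Matrix.det ((1 : Matrix (Fin n) (Fin n) ℂ) +
          Complex.I • (hessianMatrix g x).map (fun a => (a : ℂ))) =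
        Matrix.det (cmat (hessianMatrix f (Fin.cons (tfun x) x))) /
          (Complex.I * (hessianMatrix f (Fin.cons (tfun x) x) 0 0 : ℂ)) :=
  det_hessian_formula_general n I hIopen hIconv D hDopen f hf hftt tfun htI hmin g hg
end

section
/- For A ∈ Sym(ℝ^{n+1}) (indices 0,…,n), det(I_n + iA) = 0 if and only if a_00 = 0 and a⃗_0 = 0; equivalently, S = { A ∈ Sym(ℝ^{n+1}) : A = diag(0, A^+) }, the set of symmetric matrices whose 0-th row and column vanish. -/
/-!
If `(I_n + iA) v = 0`, pairing with `v̄` gives `v̄ᵀ I_n v + i v̄ᵀ A v = 0` where both quadratic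
forms are real, so `v̄ᵀ I_n v = 0`. As `I_n` is positive semidefinite this forces `I_n v = 0`,
i.e. `v` is a nonzero multiple of `e₀`, and then `A v = 0` says that the `0`-th column of `A`
vanishes. Conversely, if that column vanishes then `e₀` lies in the kernel of `I_n + iA`.
-/

open Real Filter Matrix

open scoped ComplexOrder

namespace Matrix

variable {ι : Type*} [Fintype ι]

theorem mulVec_eq_zero_of_posSemidef_add_I_smul {D A : Matrix ι ι ℂ} (hD : D.PosSemidef)
    (hA : A.IsHermitian) {v : ι → ℂ} (hv : (D + Complex.I • A) *ᵥ v = 0) :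
    D *ᵥ v = 0 ∧ A *ᵥ v = 0 := by
  set p := star v ⬝ᵥ D *ᵥ v
  set q := star v ⬝ᵥ A *ᵥ v
  have hp : p.im = 0 := hD.isHermitian.im_star_dotProduct_mulVec_self v
  have hq : q.im = 0 := hA.im_star_dotProduct_mulVec_self v
  have hpq : p + Complex.I * q = 0 := by
    simpa [p, q, add_mulVec, smul_mulVec, dotProduct_add] using congrArg (star v ⬝ᵥ ·) hv
  have hp0 : p = 0 := Complex.ext (by simpa [hq] using congrArg Complex.re hpq) hp
  have hDv : D *ᵥ v = 0 := (hD.dotProduct_mulVec_zero_iff v).mp hp0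
  rw [add_mulVec, hDv, zero_add, smul_mulVec] at hv
  exact ⟨hDv, (smul_eq_zero.mp hv).resolve_left Complex.I_ne_zero⟩

theorem IsSymm.col_zero_eq_zero_iff {R : Type*} {n : ℕ}
    {A : Matrix (Fin (n+1)) (Fin (n+1)) R} [Zero R] (hA : A.IsSymm) :
    (∀ i, A i 0 = 0) ↔ A 0 0 = 0 ∧ ∀ j : Fin n, A 0 j.succ = 0 := by
  simp only [Fin.forall_fin_succ, ← hA.apply 0]

end Matrix

theorem Inmat_posSemidef (n : ℕ) : (Inmat n).PosSemidef := by
  rw [Inmat, posSemidef_diagonal_iff]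
  intro i
  split_ifs <;> norm_num

theorem Inmat_mulVec_eq_zero_iff {n : ℕ} {v : Fin (n+1) → ℂ} :
    Inmat n *ᵥ v = 0 ↔ v = Pi.single 0 (v 0) := by
  simp only [Inmat, mulVec_diagonal, funext_iff, Pi.zero_apply, Pi.single_apply]
  refine forall_congr' fun i => ?_
  by_cases hi : i = 0 <;> simp [hi]

theorem cmat_det_eq_zero_iff_col_zero {n : ℕ} {A : Matrix (Fin (n+1)) (Fin (n+1)) ℝ}
    (hA : A.IsSymm) : (cmat A).det = 0 ↔ ∀ i, A i 0 = 0 := by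
  have hAc : (A.map ((↑) : ℝ → ℂ)).IsHermitian :=
    (isHermitian_iff_isSymm.mpr hA).map _ fun _ => (Complex.conj_ofReal _).symm
  rw [← exists_mulVec_eq_zero_iff]
  constructor
  · rintro ⟨v, hv0, hv⟩
    obtain ⟨hIv, hAv⟩ := mulVec_eq_zero_of_posSemidef_add_I_smul (Inmat_posSemidef n) hAc hv
    rw [Inmat_mulVec_eq_zero_iff] at hIv
    have hv00 : v 0 ≠ 0 := fun h => hv0 (by rw [hIv, h, Pi.single_zero])
    intro i
    have hAvi := congrFun hAv i
    rw [hIv, mulVec_single] at hAvi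
    simpa [hv00] using hAvi
  · intro hcol
    refine ⟨Pi.single 0 1, by simp, ?_⟩
    ext i
    by_cases hi : i = 0 <;> simp [cmat, Inmat, hi, hcol]

/-- For `A ∈ Sym(ℝ^{n+1})`, `det(I_n + iA) = 0` iff `a₀₀ = 0` and `a⃗₀ = 0`;
equivalently, `S` is the set of symmetric matrices whose `0`-th row and column
vanish. -/
theorem S_characterization (n : ℕ) (A : Matrix (Fin (n+1)) (Fin (n+1)) ℝ)
    (hA : A.IsSymm) :
    (cmat A).det = 0 ↔ (A 0 0 = 0 ∧ ∀ j : Fin n, A 0 j.succ = 0) :=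
  (cmat_det_eq_zero_iff_col_zero hA).trans hA.col_zero_eq_zero_iff
end
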